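/- For every 0 ≤ i ≤ n, the first-order part of the generator applied to R_i equals the entropy production: L_1 R_i = σ_i (as an identity of smooth functions on X). -/

import Mathlib

open scoped BigOperators
open MeasureTheory

noncomputable section

namespace EP

/-- `d`-dimensional vectors. -/
abbrev Vec (d : ℕ) := Fin d → ℝ

/-- The phase space `X = (ℝ^d)^n × (ℝ^d)^n × (ℝ^d × ℝ^d)`,
coordinates `x = (p, q, (r₁, rₙ))`. -/
abbrev Phase (d n : ℕ) := (Fin n → Vec d) × (Fin n → Vec d) × (Vec d × Vec d)

/-- Euclidean dot product on `ℝ^d`. -/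
def dotp {d : ℕ} (a b : Vec d) : ℝ := ∑ j, a j * b j

/-- 1-based access to an `n`-tuple of vectors (defaults to `0` out of range;
all uses below are in range). -/
def nth {d n : ℕ} (v : Fin n → Vec d) (i : ℕ) : Vec d :=
  if h : 1 ≤ i ∧ i ≤ n then v ⟨i - 1, by omega⟩ else 0

/-- The coordinate direction `j` of the `i`-th (1-based) vector in `(ℝ^d)^n`. -/
def basisQ (d n : ℕ) (i : ℕ) (j : Fin d) : Fin n → Vec d :=
  if h : 1 ≤ i ∧ i ≤ n then Pi.single (⟨i - 1, by omega⟩ : Fin n) (Pi.single j 1) else 0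

/-- Coordinate direction in `X`: component `j` of `p_i`. -/
def eP (d n : ℕ) (i : ℕ) (j : Fin d) : Phase d n := (basisQ d n i j, 0, 0, 0)
/-- Coordinate direction in `X`: component `j` of `q_i`. -/
def eQ (d n : ℕ) (i : ℕ) (j : Fin d) : Phase d n := (0, basisQ d n i j, 0, 0)
/-- Coordinate direction in `X`: component `j` of `r₁`. -/
def eR1 (d n : ℕ) (j : Fin d) : Phase d n := (0, 0, Pi.single j 1, 0)
/-- Coordinate direction in `X`: component `j` of `rₙ`. -/
def eRn (d n : ℕ) (j : Fin d) : Phase d n := (0, 0, 0, Pi.single j 1)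

/-- First-order partial derivative of `f` in direction `v` at `x`. -/
def pd {d n : ℕ} (f : Phase d n → ℝ) (v x : Phase d n) : ℝ := fderiv ℝ f x v

/-- Second-order partial derivative of `f` in direction `v` at `x`. -/
def pd2 {d n : ℕ} (f : Phase d n → ℝ) (v x : Phase d n) : ℝ :=
  fderiv ℝ (fun y => fderiv ℝ f y v) x v

section Helpers

variable {d n : ℕ}

lemma nth_in {k : ℕ} (h1 : 1 ≤ k) (h2 : k ≤ n) (v : Fin n → Vec d) :
    nth v k = v ⟨k - 1, by omega⟩ := dif_pos ⟨h1, h2⟩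

@[simp] lemma nth_zero (k : ℕ) : nth (0 : Fin n → Vec d) k = 0 := by
  unfold nth; split <;> rfl

@[simp] lemma dotp_zero_right (a : Vec d) : dotp a 0 = 0 := by simp [dotp]
@[simp] lemma dotp_zero_left (a : Vec d) : dotp 0 a = 0 := by simp [dotp]

@[simp] lemma dotp_single (a : Vec d) (j : Fin d) : dotp a (Pi.single j 1) = a j := by
  simp [dotp, Pi.single_apply]

/-- Insert a vector in slot `m` (1-based). -/
def insV (d n : ℕ) (m : ℕ) (a : Vec d) : Fin n → Vec d :=
  if h : 1 ≤ m ∧ m ≤ n then Pi.single (⟨m - 1, by omega⟩ : Fin n) a else 0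

lemma basisQ_eq (m : ℕ) (j : Fin d) : basisQ d n m j = insV d n m (Pi.single j 1) := rfl

lemma nth_insV {k : ℕ} (h1 : 1 ≤ k) (h2 : k ≤ n) (m : ℕ) (a : Vec d) :
    nth (insV d n m a) k = if m = k then a else 0 := by
  unfold insV
  by_cases hm : 1 ≤ m ∧ m ≤ n
  · rw [dif_pos hm, nth_in h1 h2]
    rcases eq_or_ne m k with rfl | hne
    · simp
    · rw [if_neg hne, Pi.single_apply, if_neg]
      intro hcon
      apply hne
      have : k - 1 = m - 1 := congrArg Fin.val hcon
      omega
  · rw [dif_neg hm, if_neg, nth_zero]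
    intro hcon; exact hm ⟨by omega, by omega⟩

lemma nth_basisQ {k : ℕ} (h1 : 1 ≤ k) (h2 : k ≤ n) (m : ℕ) (j : Fin d) :
    nth (basisQ d n m j) k = if m = k then Pi.single j 1 else 0 := by
  rw [basisQ_eq, nth_insV h1 h2]

lemma sum_single_smul (u : Vec d) : ∑ j, u j • (Pi.single j 1 : Vec d) = u := by
  funext j'
  simp [Finset.sum_apply, Pi.single_apply]

/-- Apply a continuous linear functional: expansion in coordinates. -/
lemma clm_apply_eq_sum (L : Vec d →L[ℝ] ℝ) (u : Vec d) :
    ∑ j, u j * L (Pi.single j 1 : Vec d) = L u := by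
  conv_rhs => rw [← sum_single_smul u]
  rw [map_sum]
  simp

lemma sum_smul_basisQ (m : ℕ) (a : Vec d) :
    ∑ j, a j • basisQ d n m j = insV d n m a := by
  unfold basisQ insV
  by_cases hm : 1 ≤ m ∧ m ≤ n
  · rw [dif_pos hm]
    simp only [dif_pos hm]
    funext y
    simp only [Finset.sum_apply, Pi.smul_apply, Pi.single_apply]
    split
    · exact sum_single_smul a
    · simp
  · simp [dif_neg hm]

/-- Sum over `Icc 1 n` as a sum over `Fin n`. -/
lemma sum_Icc_one {M : Type*} [AddCommMonoid M] (f : ℕ → M) :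
    ∑ m ∈ Finset.Icc 1 n, f m = ∑ a : Fin n, f (a.1 + 1) := by
  induction n with
  | zero => simp
  | succ N ih =>
    rw [Finset.sum_Icc_succ_top (by omega), ih, Fin.sum_univ_castSucc]
    simp

lemma telescope (ψ : ℕ → ℝ) {a b : ℕ} (h : a ≤ b) :
    ∑ m ∈ Finset.Icc (a + 1) b, (ψ (m - 1) - ψ m) = ψ a - ψ b := by
  induction b, h using Nat.le_induction with
  | base => simp
  | succ b hb ih =>
    rw [Finset.sum_Icc_succ_top (by omega), ih]
    simp

end Helpers

/-- The potential `V(q) = Σ_{i=1}^n U¹(q_i) + Σ_{i=1}^{n-1} U²(q_i - q_{i+1})`. -/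
def Vpot (d n : ℕ) (U1 U2 : Vec d → ℝ) (q : Fin n → Vec d) : ℝ :=
  (∑ i ∈ Finset.Icc 1 n, U1 (nth q i)) +
  (∑ i ∈ Finset.Icc 1 (n - 1), U2 (nth q i - nth q (i + 1)))

/-- `L₀ f = γ(T₁ Δ_{r₁} f + Tₙ Δ_{rₙ} f - r₁·∇_{r₁} f - rₙ·∇_{rₙ} f)`. -/
def gen0 (d n : ℕ) (ga T1 Tn : ℝ) (f : Phase d n → ℝ) (x : Phase d n) : ℝ :=
  ga * (T1 * ∑ j, pd2 f (eR1 d n j) x + Tn * ∑ j, pd2 f (eRn d n j) x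
      - ∑ j, x.2.2.1 j * pd f (eR1 d n j) x
      - ∑ j, x.2.2.2 j * pd f (eRn d n j) x)

/-- The first-order part
`L₁ f = λ(p₁·∇_{r₁} f + pₙ·∇_{rₙ} f - r₁·∇_{p₁} f - rₙ·∇_{pₙ} f)
  + (Σ p_i·∇_{q_i} f - Σ ∇_{q_i}V·∇_{p_i} f)`. -/
def gen1 (d n : ℕ) (U1 U2 : Vec d → ℝ) (lam : ℝ) (f : Phase d n → ℝ) (x : Phase d n) : ℝ :=
  lam * ((∑ j, nth x.1 1 j * pd f (eR1 d n j) x)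
       + (∑ j, nth x.1 n j * pd f (eRn d n j) x)
       - (∑ j, x.2.2.1 j * pd f (eP d n 1 j) x)
       - (∑ j, x.2.2.2 j * pd f (eP d n n j) x))
  + ((∑ i ∈ Finset.Icc 1 n, ∑ j, nth x.1 i j * pd f (eQ d n i j) x)
   - (∑ i ∈ Finset.Icc 1 n, ∑ j,
       fderiv ℝ (Vpot d n U1 U2) x.2.1 (basisQ d n i j) * pd f (eP d n i j) x))

/-- The generator `L = L₀ + L₁`. -/
def gen (d n : ℕ) (U1 U2 : Vec d → ℝ) (ga lam T1 Tn : ℝ)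
    (f : Phase d n → ℝ) (x : Phase d n) : ℝ :=
  gen0 d n ga T1 Tn f x + gen1 d n U1 U2 lam f x

/-- The formal adjoint `Lᵀ`. -/
def genT (d n : ℕ) (U1 U2 : Vec d → ℝ) (ga lam T1 Tn : ℝ)
    (g : Phase d n → ℝ) (x : Phase d n) : ℝ :=
  ga * (T1 * ∑ j, pd2 g (eR1 d n j) x + Tn * ∑ j, pd2 g (eRn d n j) x
      + ∑ j, x.2.2.1 j * pd g (eR1 d n j) x
      + ∑ j, x.2.2.2 j * pd g (eRn d n j) x
      + 2 * (d : ℝ) * g x)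
  - lam * ((∑ j, nth x.1 1 j * pd g (eR1 d n j) x)
         + (∑ j, nth x.1 n j * pd g (eRn d n j) x)
         - (∑ j, x.2.2.1 j * pd g (eP d n 1 j) x)
         - (∑ j, x.2.2.2 j * pd g (eP d n n j) x))
  - ((∑ i ∈ Finset.Icc 1 n, ∑ j, nth x.1 i j * pd g (eQ d n i j) x)
   - (∑ i ∈ Finset.Icc 1 n, ∑ j,
       fderiv ℝ (Vpot d n U1 U2) x.2.1 (basisQ d n i j) * pd g (eP d n i j) x))

/-- The heat flows `Φ_i`, `0 ≤ i ≤ n`. -/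
def flow (d n : ℕ) (U2 : Vec d → ℝ) (lam : ℝ) (i : ℕ) (x : Phase d n) : ℝ :=
  if i = 0 then - lam * dotp x.2.2.1 (nth x.1 1)
  else if i = n then lam * dotp x.2.2.2 (nth x.1 n)
  else ∑ j, ((nth x.1 i j + nth x.1 (i + 1) j) / 2) *
        fderiv ℝ U2 (nth x.2.1 i - nth x.2.1 (i + 1)) (Pi.single j 1)

/-- The entropy productions `σ_i = (1/Tₙ - 1/T₁) Φ_i`. -/
def sigmaF (d n : ℕ) (U2 : Vec d → ℝ) (lam T1 Tn : ℝ) (i : ℕ) (x : Phase d n) : ℝ :=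
  (1 / Tn - 1 / T1) * flow d n U2 lam i x

/-- The local energies `H_i`, `1 ≤ i ≤ n`. -/
def locH (d n : ℕ) (U1 U2 : Vec d → ℝ) (i : ℕ) (x : Phase d n) : ℝ :=
  dotp (nth x.1 i) (nth x.1 i) / 2 + U1 (nth x.2.1 i)
  + (if 2 ≤ i then U2 (nth x.2.1 (i - 1) - nth x.2.1 i) else 0) / 2
  + (if i < n then U2 (nth x.2.1 i - nth x.2.1 (i + 1)) else 0) / 2

/-- `R_i = (1/T₁)(|r₁|²/2 + Σ_{k=1}^i H_k) + (1/Tₙ)(Σ_{k=i+1}^n H_k + |rₙ|²/2)`. -/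
def Rfun (d n : ℕ) (U1 U2 : Vec d → ℝ) (T1 Tn : ℝ) (i : ℕ) (x : Phase d n) : ℝ :=
  (1 / T1) * (dotp x.2.2.1 x.2.2.1 / 2 + ∑ k ∈ Finset.Icc 1 i, locH d n U1 U2 k x)
  + (1 / Tn) * ((∑ k ∈ Finset.Icc (i + 1) n, locH d n U1 U2 k x) + dotp x.2.2.2 x.2.2.2 / 2)

/-- The total energy `G(p,q,r) = |r₁|²/2 + |rₙ|²/2 + Σ|p_i|²/2 + V(q)`. -/
def Gfun (d n : ℕ) (U1 U2 : Vec d → ℝ) (x : Phase d n) : ℝ :=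
  dotp x.2.2.1 x.2.2.1 / 2 + dotp x.2.2.2 x.2.2.2 / 2
  + (∑ i : Fin n, dotp (x.1 i) (x.1 i) / 2) + Vpot d n U1 U2 x.2.1

/-- The chain energy `H_S(p,q) = Σ|p_i|²/2 + V(q)`. -/
def HS (d n : ℕ) (U1 U2 : Vec d → ℝ) (x : Phase d n) : ℝ :=
  (∑ i : Fin n, dotp (x.1 i) (x.1 i) / 2) + Vpot d n U1 U2 x.2.1

/-- Momentum reversal `(Jf)(p,q,r) = f(-p,q,r)`. -/
def Jop {d n : ℕ} (f : Phase d n → ℝ) : Phase d n → ℝ := fun x => f (-x.1, x.2)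

/-- `L̃_α f = L f + 2αγ (r₁·∇_{r₁} f + rₙ·∇_{rₙ} f)`. -/
def genTilde (d n : ℕ) (U1 U2 : Vec d → ℝ) (ga lam T1 Tn al : ℝ)
    (f : Phase d n → ℝ) (x : Phase d n) : ℝ :=
  gen d n U1 U2 ga lam T1 Tn f x
  + 2 * al * ga * ((∑ j, x.2.2.1 j * pd f (eR1 d n j) x)
                 + (∑ j, x.2.2.2 j * pd f (eRn d n j) x))

/-- `L̄_α f = L̃_α f - ((α-α²)γ(|r₁|²/T₁ + |rₙ|²/Tₙ) - 2dαγ) f`. -/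
def genBar (d n : ℕ) (U1 U2 : Vec d → ℝ) (ga lam T1 Tn al : ℝ)
    (f : Phase d n → ℝ) (x : Phase d n) : ℝ :=
  genTilde d n U1 U2 ga lam T1 Tn al f x
  - ((al - al ^ 2) * ga * (dotp x.2.2.1 x.2.2.1 / T1 + dotp x.2.2.2 x.2.2.2 / Tn)
     - 2 * (d : ℝ) * al * ga) * f x

section Deriv

variable {d n : ℕ}

def cP (d n : ℕ) (a : Fin n) : Phase d n →L[ℝ] Vec d :=
  (ContinuousLinearMap.proj a).comp (ContinuousLinearMap.fst ℝ _ _)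
def cQ (d n : ℕ) (a : Fin n) : Phase d n →L[ℝ] Vec d :=
  (ContinuousLinearMap.proj a).comp
    ((ContinuousLinearMap.fst ℝ _ _).comp (ContinuousLinearMap.snd ℝ _ _))
def cR1 (d n : ℕ) : Phase d n →L[ℝ] Vec d :=
  (ContinuousLinearMap.fst ℝ _ _).comp
    ((ContinuousLinearMap.snd ℝ _ _).comp (ContinuousLinearMap.snd ℝ _ _))
def cRn (d n : ℕ) : Phase d n →L[ℝ] Vec d :=
  (ContinuousLinearMap.snd ℝ _ _).comp
    ((ContinuousLinearMap.snd ℝ _ _).comp (ContinuousLinearMap.snd ℝ _ _))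

@[simp] lemma cP_apply (a : Fin n) (x : Phase d n) : cP d n a x = x.1 a := rfl
@[simp] lemma cQ_apply (a : Fin n) (x : Phase d n) : cQ d n a x = x.2.1 a := rfl
@[simp] lemma cR1_apply (x : Phase d n) : cR1 d n x = x.2.2.1 := rfl
@[simp] lemma cRn_apply (x : Phase d n) : cRn d n x = x.2.2.2 := rfl

def dotCLM (a : Vec d) : Vec d →L[ℝ] ℝ := ∑ j, a j • ContinuousLinearMap.proj j

@[simp] lemma dotCLM_apply (a b : Vec d) : dotCLM a b = dotp a b := by
  simp [dotCLM, dotp, ContinuousLinearMap.sum_apply]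

lemma hasFD_sq (a : Vec d) :
    HasFDerivAt (fun b : Vec d => dotp b b) (dotCLM a + dotCLM a) a := by
  have H : HasFDerivAt (fun b : Vec d => ∑ j, b j * b j)
      (∑ j, (a j • ContinuousLinearMap.proj (R := ℝ) (φ := fun _ : Fin d => ℝ) j
           + a j • ContinuousLinearMap.proj j)) a :=
    HasFDerivAt.fun_sum (fun j _ => by
      have h := ((ContinuousLinearMap.proj (R := ℝ) (φ := fun _ : Fin d => ℝ)
          j).hasFDerivAt (x := a)).mul ((ContinuousLinearMap.proj j).hasFDerivAt (x := a))
      exact h)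
  have he : (∑ j, (a j • ContinuousLinearMap.proj (R := ℝ) (φ := fun _ : Fin d => ℝ) j
           + a j • ContinuousLinearMap.proj j)) = dotCLM a + dotCLM a := by
    rw [Finset.sum_add_distrib]; rfl
  rw [he] at H
  exact H

lemma exL_sqR1 (x : Phase d n) :
    ∃ L : Phase d n →L[ℝ] ℝ, HasFDerivAt (fun y : Phase d n => dotp y.2.2.1 y.2.2.1) L x ∧
      ∀ v : Phase d n, L v = 2 * dotp x.2.2.1 v.2.2.1 := by
  refine ⟨(dotCLM x.2.2.1 + dotCLM x.2.2.1).comp (cR1 d n), ?_, ?_⟩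
  · have h := (hasFD_sq x.2.2.1).comp x (cR1 d n).hasFDerivAt
    exact h
  · intro v; simp; ring

lemma exL_sqRn (x : Phase d n) :
    ∃ L : Phase d n →L[ℝ] ℝ, HasFDerivAt (fun y : Phase d n => dotp y.2.2.2 y.2.2.2) L x ∧
      ∀ v : Phase d n, L v = 2 * dotp x.2.2.2 v.2.2.2 := by
  refine ⟨(dotCLM x.2.2.2 + dotCLM x.2.2.2).comp (cRn d n), ?_, ?_⟩
  · have h := (hasFD_sq x.2.2.2).comp x (cRn d n).hasFDerivAt
    exact h
  · intro v; simp; ring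

lemma exL_sqP {k : ℕ} (h1 : 1 ≤ k) (h2 : k ≤ n) (x : Phase d n) :
    ∃ L : Phase d n →L[ℝ] ℝ,
      HasFDerivAt (fun y : Phase d n => dotp (nth y.1 k) (nth y.1 k)) L x ∧
      ∀ v : Phase d n, L v = 2 * dotp (nth x.1 k) (nth v.1 k) := by
  refine ⟨(dotCLM (x.1 ⟨k - 1, by omega⟩) + dotCLM (x.1 ⟨k - 1, by omega⟩)).comp
      (cP d n ⟨k - 1, by omega⟩), ?_, ?_⟩
  · have hfun : (fun y : Phase d n => dotp (nth y.1 k) (nth y.1 k))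
        = fun y : Phase d n => dotp (y.1 ⟨k - 1, by omega⟩) (y.1 ⟨k - 1, by omega⟩) := by
      funext y; rw [nth_in h1 h2]
    rw [hfun]
    exact (hasFD_sq _).comp x (cP d n _).hasFDerivAt
  · intro v; simp [nth_in h1 h2]; ring

lemma exL_U1 {U1 : Vec d → ℝ} (hU1 : Differentiable ℝ U1)
    {k : ℕ} (h1 : 1 ≤ k) (h2 : k ≤ n) (x : Phase d n) :
    ∃ L : Phase d n →L[ℝ] ℝ,
      HasFDerivAt (fun y : Phase d n => U1 (nth y.2.1 k)) L x ∧
      ∀ v : Phase d n, L v = fderiv ℝ U1 (nth x.2.1 k) (nth v.2.1 k) := by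
  refine ⟨(fderiv ℝ U1 (x.2.1 ⟨k - 1, by omega⟩)).comp (cQ d n ⟨k - 1, by omega⟩), ?_, ?_⟩
  · have hfun : (fun y : Phase d n => U1 (nth y.2.1 k))
        = fun y : Phase d n => U1 (y.2.1 ⟨k - 1, by omega⟩) := by
      funext y; rw [nth_in h1 h2]
    rw [hfun]
    exact ((hU1 _).hasFDerivAt).comp x (cQ d n _).hasFDerivAt
  · intro v; simp [nth_in h1 h2]

lemma exL_U2 {U2 : Vec d → ℝ} (hU2 : Differentiable ℝ U2)
    {k k' : ℕ} (h1 : 1 ≤ k) (h2 : k ≤ n) (h1' : 1 ≤ k') (h2' : k' ≤ n) (x : Phase d n) :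
    ∃ L : Phase d n →L[ℝ] ℝ,
      HasFDerivAt (fun y : Phase d n => U2 (nth y.2.1 k - nth y.2.1 k')) L x ∧
      ∀ v : Phase d n,
        L v = fderiv ℝ U2 (nth x.2.1 k - nth x.2.1 k') (nth v.2.1 k - nth v.2.1 k') := by
  refine ⟨(fderiv ℝ U2 (x.2.1 ⟨k - 1, by omega⟩ - x.2.1 ⟨k' - 1, by omega⟩)).comp
      (cQ d n ⟨k - 1, by omega⟩ - cQ d n ⟨k' - 1, by omega⟩), ?_, ?_⟩
  · have hfun : (fun y : Phase d n => U2 (nth y.2.1 k - nth y.2.1 k'))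
        = fun y : Phase d n => U2 (y.2.1 ⟨k - 1, by omega⟩ - y.2.1 ⟨k' - 1, by omega⟩) := by
      funext y; rw [nth_in h1 h2, nth_in h1' h2']
    rw [hfun]
    exact ((hU2 _).hasFDerivAt).comp x (cQ d n _ - cQ d n _).hasFDerivAt
  · intro v
    rw [nth_in h1 h2, nth_in h1' h2', nth_in h1 h2, nth_in h1' h2']
    simp

/-- Directional derivative data for `locH`. -/
def DH (d n : ℕ) (U1 U2 : Vec d → ℝ) (k : ℕ) (x : Phase d n)
    (vp vq : Fin n → Vec d) : ℝ :=
  dotp (nth x.1 k) (nth vp k)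
  + fderiv ℝ U1 (nth x.2.1 k) (nth vq k)
  + (if 2 ≤ k then
      fderiv ℝ U2 (nth x.2.1 (k - 1) - nth x.2.1 k) (nth vq (k - 1) - nth vq k) else 0) / 2
  + (if k < n then
      fderiv ℝ U2 (nth x.2.1 k - nth x.2.1 (k + 1)) (nth vq k - nth vq (k + 1)) else 0) / 2

lemma exL_locH {U1 U2 : Vec d → ℝ} (hU1 : Differentiable ℝ U1) (hU2 : Differentiable ℝ U2)
    {k : ℕ} (h1 : 1 ≤ k) (h2 : k ≤ n) (x : Phase d n) :
    ∃ L : Phase d n →L[ℝ] ℝ, HasFDerivAt (locH d n U1 U2 k) L x ∧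
      ∀ v : Phase d n, L v = DH d n U1 U2 k x v.1 v.2.1 := by
  obtain ⟨L1, hL1, e1⟩ := exL_sqP h1 h2 x
  obtain ⟨L2, hL2, e2⟩ := exL_U1 hU1 h1 h2 x
  have H3 : ∃ L3 : Phase d n →L[ℝ] ℝ,
      HasFDerivAt (fun y : Phase d n =>
        (if 2 ≤ k then U2 (nth y.2.1 (k - 1) - nth y.2.1 k) else 0)) L3 x ∧
      ∀ v : Phase d n, L3 v = (if 2 ≤ k then
        fderiv ℝ U2 (nth x.2.1 (k - 1) - nth x.2.1 k) (nth v.2.1 (k - 1) - nth v.2.1 k)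
        else 0) := by
    by_cases hk2 : 2 ≤ k
    · simp only [if_pos hk2]
      exact exL_U2 hU2 (by omega) (by omega) h1 h2 x
    · simp only [if_neg hk2]
      exact ⟨0, hasFDerivAt_const 0 x, by simp⟩
  have H4 : ∃ L4 : Phase d n →L[ℝ] ℝ,
      HasFDerivAt (fun y : Phase d n =>
        (if k < n then U2 (nth y.2.1 k - nth y.2.1 (k + 1)) else 0)) L4 x ∧
      ∀ v : Phase d n, L4 v = (if k < n then
        fderiv ℝ U2 (nth x.2.1 k - nth x.2.1 (k + 1)) (nth v.2.1 k - nth v.2.1 (k + 1))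
        else 0) := by
    by_cases hkn : k < n
    · simp only [if_pos hkn]
      exact exL_U2 hU2 h1 h2 (by omega) (by omega) x
    · simp only [if_neg hkn]
      exact ⟨0, hasFDerivAt_const 0 x, by simp⟩
  obtain ⟨L3, hL3, e3⟩ := H3
  obtain ⟨L4, hL4, e4⟩ := H4
  refine ⟨(2:ℝ)⁻¹ • L1 + L2 + (2:ℝ)⁻¹ • L3 + (2:ℝ)⁻¹ • L4, ?_, ?_⟩
  · unfold locH
    simp only [div_eq_inv_mul]
    exact (((hL1.const_mul _).add hL2).add (hL3.const_mul _)).add (hL4.const_mul _)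
  · intro v
    simp only [ContinuousLinearMap.add_apply, ContinuousLinearMap.smul_apply,
      smul_eq_mul, e1, e2, e3, e4, DH]
    ring

end Deriv

section Deriv2

variable {d n : ℕ}

lemma hasFD_proj (ix : Fin n) (q : Fin n → Vec d) :
    HasFDerivAt (fun w : Fin n → Vec d => w ix)
      (ContinuousLinearMap.proj ix : (Fin n → Vec d) →L[ℝ] Vec d) q :=
  (ContinuousLinearMap.proj (R := ℝ) (φ := fun _ : Fin n => Vec d) ix).hasFDerivAt

lemma hasFD_projsub (ix ix' : Fin n) (q : Fin n → Vec d) :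
    HasFDerivAt (fun w : Fin n → Vec d => w ix - w ix')
      (ContinuousLinearMap.proj (R := ℝ) (φ := fun _ : Fin n => Vec d) ix
        - ContinuousLinearMap.proj ix') q :=
  (hasFD_proj ix q).sub (hasFD_proj ix' q)

lemma exL_U1E {U1 : Vec d → ℝ} (hU1 : Differentiable ℝ U1)
    {k : ℕ} (h1 : 1 ≤ k) (h2 : k ≤ n) (q : Fin n → Vec d) :
    ∃ L : (Fin n → Vec d) →L[ℝ] ℝ,
      HasFDerivAt (fun w : Fin n → Vec d => U1 (nth w k)) L q ∧
      ∀ w, L w = fderiv ℝ U1 (nth q k) (nth w k) := by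
  refine ⟨(fderiv ℝ U1 (q ⟨k - 1, by omega⟩)).comp
      (ContinuousLinearMap.proj ⟨k - 1, by omega⟩), ?_, ?_⟩
  · have hfun : (fun w : Fin n → Vec d => U1 (nth w k))
        = fun w : Fin n → Vec d => U1 (w ⟨k - 1, by omega⟩) := by
      funext w; rw [nth_in h1 h2]
    rw [hfun]
    exact ((hU1 _).hasFDerivAt).comp q (hasFD_proj _ q)
  · intro w; simp [nth_in h1 h2]

lemma exL_U2E {U2 : Vec d → ℝ} (hU2 : Differentiable ℝ U2)
    {k k' : ℕ} (h1 : 1 ≤ k) (h2 : k ≤ n) (h1' : 1 ≤ k') (h2' : k' ≤ n) (q : Fin n → Vec d) :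
    ∃ L : (Fin n → Vec d) →L[ℝ] ℝ,
      HasFDerivAt (fun w : Fin n → Vec d => U2 (nth w k - nth w k')) L q ∧
      ∀ w, L w = fderiv ℝ U2 (nth q k - nth q k') (nth w k - nth w k') := by
  refine ⟨(fderiv ℝ U2 (q ⟨k - 1, by omega⟩ - q ⟨k' - 1, by omega⟩)).comp
      (ContinuousLinearMap.proj ⟨k - 1, by omega⟩
        - ContinuousLinearMap.proj ⟨k' - 1, by omega⟩), ?_, ?_⟩
  · have hfun : (fun w : Fin n → Vec d => U2 (nth w k - nth w k'))
        = fun w : Fin n → Vec d => U2 (w ⟨k - 1, by omega⟩ - w ⟨k' - 1, by omega⟩) := by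
      funext w; rw [nth_in h1 h2, nth_in h1' h2']
    rw [hfun]
    exact ((hU2 _).hasFDerivAt).comp q (hasFD_projsub _ _ q)
  · intro w
    rw [nth_in h1 h2, nth_in h1' h2', nth_in h1 h2, nth_in h1' h2']
    simp

lemma exL_Vpot {U1 U2 : Vec d → ℝ} (hU1 : Differentiable ℝ U1) (hU2 : Differentiable ℝ U2)
    (q : Fin n → Vec d) :
    ∃ M : (Fin n → Vec d) →L[ℝ] ℝ, HasFDerivAt (Vpot d n U1 U2) M q ∧
      ∀ w, M w = (∑ k ∈ Finset.Icc 1 n, fderiv ℝ U1 (nth q k) (nth w k))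
        + ∑ k ∈ Finset.Icc 1 (n - 1),
            fderiv ℝ U2 (nth q k - nth q (k + 1)) (nth w k - nth w (k + 1)) := by
  have hA : ∀ k : ℕ, ∃ L : (Fin n → Vec d) →L[ℝ] ℝ,
      ∀ (h1 : 1 ≤ k) (h2 : k ≤ n),
        HasFDerivAt (fun w : Fin n → Vec d => U1 (nth w k)) L q ∧
        ∀ w, L w = fderiv ℝ U1 (nth q k) (nth w k) := by
    intro k
    by_cases h : 1 ≤ k ∧ k ≤ n
    · obtain ⟨L, hL, he⟩ := exL_U1E hU1 h.1 h.2 q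
      exact ⟨L, fun _ _ => ⟨hL, he⟩⟩
    · exact ⟨0, fun h1 h2 => absurd ⟨h1, h2⟩ h⟩
  have hB : ∀ k : ℕ, ∃ L : (Fin n → Vec d) →L[ℝ] ℝ,
      ∀ (h1 : 1 ≤ k) (h2 : k ≤ n - 1),
        HasFDerivAt (fun w : Fin n → Vec d => U2 (nth w k - nth w (k + 1))) L q ∧
        ∀ w, L w = fderiv ℝ U2 (nth q k - nth q (k + 1)) (nth w k - nth w (k + 1)) := by
    intro k
    by_cases h : 1 ≤ k ∧ k ≤ n - 1
    · obtain ⟨L, hL, he⟩ := exL_U2E hU2 h.1 (by omega) (by omega : 1 ≤ k + 1)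
        (by omega : k + 1 ≤ n) q
      exact ⟨L, fun _ _ => ⟨hL, he⟩⟩
    · exact ⟨0, fun h1 h2 => absurd ⟨h1, h2⟩ h⟩
  choose LA hLA using hA
  choose LB hLB using hB
  have hS1 : HasFDerivAt (fun w : Fin n → Vec d => ∑ k ∈ Finset.Icc 1 n, U1 (nth w k))
      (∑ k ∈ Finset.Icc 1 n, LA k) q :=
    HasFDerivAt.fun_sum (fun k hk =>
      (hLA k (Finset.mem_Icc.mp hk).1 (Finset.mem_Icc.mp hk).2).1)
  have hS2 : HasFDerivAt
      (fun w : Fin n → Vec d => ∑ k ∈ Finset.Icc 1 (n - 1), U2 (nth w k - nth w (k + 1)))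
      (∑ k ∈ Finset.Icc 1 (n - 1), LB k) q :=
    HasFDerivAt.fun_sum (fun k hk =>
      (hLB k (Finset.mem_Icc.mp hk).1 (Finset.mem_Icc.mp hk).2).1)
  refine ⟨(∑ k ∈ Finset.Icc 1 n, LA k) + ∑ k ∈ Finset.Icc 1 (n - 1), LB k, ?_, ?_⟩
  · unfold Vpot
    exact hS1.add hS2
  · intro w
    simp only [ContinuousLinearMap.add_apply, ContinuousLinearMap.sum_apply]
    congr 1
    · exact Finset.sum_congr rfl (fun k hk =>
        (hLA k (Finset.mem_Icc.mp hk).1 (Finset.mem_Icc.mp hk).2).2 w)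
    · exact Finset.sum_congr rfl (fun k hk =>
        (hLB k (Finset.mem_Icc.mp hk).1 (Finset.mem_Icc.mp hk).2).2 w)

lemma exL_Rfun {U1 U2 : Vec d → ℝ} (hU1 : Differentiable ℝ U1) (hU2 : Differentiable ℝ U2)
    {i : ℕ} (hi : i ≤ n) (T1 Tn : ℝ) (x : Phase d n) :
    ∃ L : Phase d n →L[ℝ] ℝ, HasFDerivAt (Rfun d n U1 U2 T1 Tn i) L x ∧
      ∀ v : Phase d n, L v =
        (1 / T1) * (dotp x.2.2.1 v.2.2.1
            + ∑ k ∈ Finset.Icc 1 i, DH d n U1 U2 k x v.1 v.2.1)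
        + (1 / Tn) * ((∑ k ∈ Finset.Icc (i + 1) n, DH d n U1 U2 k x v.1 v.2.1)
            + dotp x.2.2.2 v.2.2.2) := by
  obtain ⟨LA, hLA, eA⟩ := exL_sqR1 x
  obtain ⟨LB, hLB, eB⟩ := exL_sqRn x
  have hl : ∀ k : ℕ, ∃ L : Phase d n →L[ℝ] ℝ,
      ∀ (h1 : 1 ≤ k) (h2 : k ≤ n),
        HasFDerivAt (locH d n U1 U2 k) L x ∧
        ∀ v : Phase d n, L v = DH d n U1 U2 k x v.1 v.2.1 := by
    intro k
    by_cases h : 1 ≤ k ∧ k ≤ n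
    · obtain ⟨L, hL, he⟩ := exL_locH hU1 hU2 h.1 h.2 x
      exact ⟨L, fun _ _ => ⟨hL, he⟩⟩
    · exact ⟨0, fun h1 h2 => absurd ⟨h1, h2⟩ h⟩
  choose LH hLH using hl
  have hS1 : HasFDerivAt (fun y : Phase d n => ∑ k ∈ Finset.Icc 1 i, locH d n U1 U2 k y)
      (∑ k ∈ Finset.Icc 1 i, LH k) x :=
    HasFDerivAt.fun_sum (fun k hk =>
      (hLH k (Finset.mem_Icc.mp hk).1 (le_trans (Finset.mem_Icc.mp hk).2 hi)).1)
  have hS2 : HasFDerivAt (fun y : Phase d n => ∑ k ∈ Finset.Icc (i + 1) n, locH d n U1 U2 k y)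
      (∑ k ∈ Finset.Icc (i + 1) n, LH k) x :=
    HasFDerivAt.fun_sum (fun k hk =>
      (hLH k (by have := (Finset.mem_Icc.mp hk).1; omega) (Finset.mem_Icc.mp hk).2).1)
  have e1 : ∀ v, (∑ k ∈ Finset.Icc 1 i, LH k) v
      = ∑ k ∈ Finset.Icc 1 i, DH d n U1 U2 k x v.1 v.2.1 := by
    intro v
    rw [ContinuousLinearMap.sum_apply]
    exact Finset.sum_congr rfl (fun k hk =>
      (hLH k (Finset.mem_Icc.mp hk).1 (le_trans (Finset.mem_Icc.mp hk).2 hi)).2 v)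
  have e2 : ∀ v, (∑ k ∈ Finset.Icc (i + 1) n, LH k) v
      = ∑ k ∈ Finset.Icc (i + 1) n, DH d n U1 U2 k x v.1 v.2.1 := by
    intro v
    rw [ContinuousLinearMap.sum_apply]
    exact Finset.sum_congr rfl (fun k hk =>
      (hLH k (by have := (Finset.mem_Icc.mp hk).1; omega) (Finset.mem_Icc.mp hk).2).2 v)
  refine ⟨(1 / T1) • ((2:ℝ)⁻¹ • LA + ∑ k ∈ Finset.Icc 1 i, LH k)
      + (1 / Tn) • ((∑ k ∈ Finset.Icc (i + 1) n, LH k) + (2:ℝ)⁻¹ • LB), ?_, ?_⟩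
  · unfold Rfun
    simp only [div_eq_inv_mul, one_div, mul_one]
    have H := (((hLA.const_mul ((2:ℝ)⁻¹)).add hS1).const_mul T1⁻¹).add
      ((hS2.add (hLB.const_mul ((2:ℝ)⁻¹))).const_mul Tn⁻¹)
    exact H
  · intro v
    simp only [ContinuousLinearMap.add_apply, ContinuousLinearMap.smul_apply,
      smul_eq_mul, eA, eB, e1, e2]
    ring

end Deriv2

section MainAux

variable {d n : ℕ}

lemma dotp_comm (a b : Vec d) : dotp a b = dotp b a :=
  Finset.sum_congr rfl fun j _ => mul_comm _ _

lemma sum_mul_dotp (a b : Vec d) (c : ℝ) :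
    ∑ j, a j * (c * b j) = c * dotp b a := by
  rw [dotp, Finset.mul_sum]
  exact Finset.sum_congr rfl fun j _ => by ring

lemma Icc_split {i : ℕ} (hi : i ≤ n) (g : ℕ → ℝ) :
    ∑ m ∈ Finset.Icc 1 n, g m
      = ∑ m ∈ Finset.Icc 1 i, g m + ∑ m ∈ Finset.Icc (i + 1) n, g m := by
  rw [← Finset.sum_union]
  · congr 1
    ext a
    simp only [Finset.mem_union, Finset.mem_Icc]
    omega
  · rw [Finset.disjoint_left]
    intro a ha ha'
    simp only [Finset.mem_Icc] at ha ha'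
    omega

lemma sum_insV (w : Fin n → Vec d) :
    ∑ m ∈ Finset.Icc 1 n, insV d n m (nth w m) = w := by
  rw [sum_Icc_one]
  have h : ∀ a : Fin n, insV d n (a.1 + 1) (nth w (a.1 + 1)) = Pi.single a (w a) := by
    intro a
    unfold insV
    rw [dif_pos ⟨by omega, by omega⟩, nth_in (by omega) (by omega)]
    rfl
  rw [Finset.sum_congr rfl fun a _ => h a]
  exact Finset.univ_sum_single w

end MainAux

/-- For every `0 ≤ i ≤ n`, `L₁ R_i = σ_i`. -/
theorem gen1_R_eq_sigma
    (d n : ℕ) (hd : 1 ≤ d) (hn : 2 ≤ n)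
    (U1 U2 : Vec d → ℝ) (hU1 : ContDiff ℝ (⊤ : ℕ∞) U1) (hU2 : ContDiff ℝ (⊤ : ℕ∞) U2)
    (ga lam T1 Tn : ℝ) (hga : 0 < ga) (hT1 : 0 < T1) (hTn : 0 < Tn)
    (i : ℕ) (hi : i ≤ n) :
    ∀ x : Phase d n,
      gen1 d n U1 U2 lam (Rfun d n U1 U2 T1 Tn i) x
        = sigmaF d n U2 lam T1 Tn i x := by
  have hdU1 : Differentiable ℝ U1 := hU1.differentiable (by simp)
  have hdU2 : Differentiable ℝ U2 := hU2.differentiable (by simp)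
  intro x
  obtain ⟨L, hL, eL⟩ := exL_Rfun hdU1 hdU2 hi T1 Tn x
  obtain ⟨M, hM, eM⟩ := exL_Vpot hdU1 hdU2 x.2.1
  set ψ : ℕ → ℝ := fun k =>
    if 1 ≤ k ∧ k < n then
      fderiv ℝ U2 (nth x.2.1 k - nth x.2.1 (k + 1))
        ((2:ℝ)⁻¹ • (nth x.1 k + nth x.1 (k + 1))) else 0 with hψ
  set Wm : ℕ → ℝ := fun m =>
    fderiv ℝ U1 (nth x.2.1 m) (nth x.1 m)
    + ((if m < n then fderiv ℝ U2 (nth x.2.1 m - nth x.2.1 (m + 1)) (nth x.1 m) else 0)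
      - (if 2 ≤ m then fderiv ℝ U2 (nth x.2.1 (m - 1) - nth x.2.1 m) (nth x.1 m) else 0))
    with hWm
  have hψ0 : ψ 0 = 0 := by simp [hψ]
  have hψn : ψ n = 0 := by simp [hψ]
  have DH0 : ∀ k, DH d n U1 U2 k x 0 0 = 0 := by
    intro k; simp [DH]
  have hR1 : ∀ j, L (eR1 d n j) = 1 / T1 * x.2.2.1 j := by
    intro j; rw [eL]; simp [eR1, DH0]
  have hRn : ∀ j, L (eRn d n j) = 1 / Tn * x.2.2.2 j := by
    intro j; rw [eL]; simp [eRn, DH0]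
  have hDHP : ∀ m (j : Fin d) k, 1 ≤ k → k ≤ n →
      DH d n U1 U2 k x (basisQ d n m j) 0 = if m = k then nth x.1 k j else 0 := by
    intro m j k h1 h2
    simp only [DH, nth_basisQ h1 h2, apply_ite (dotp (nth x.1 k))]
    simp
  have hP : ∀ m (j : Fin d), 1 ≤ m → m ≤ n →
      L (eP d n m j) = (if m ≤ i then 1 / T1 else 1 / Tn) * nth x.1 m j := by
    intro m j hm1 hm2
    rw [eL]
    have hc1 : (eP d n m j).1 = basisQ d n m j := rfl
    have hc2 : (eP d n m j).2.1 = 0 := rfl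
    have hc3 : (eP d n m j).2.2.1 = 0 := rfl
    have hc4 : (eP d n m j).2.2.2 = 0 := rfl
    rw [hc1, hc2, hc3, hc4, dotp_zero_right, dotp_zero_right]
    have h1 : ∑ k ∈ Finset.Icc 1 i, DH d n U1 U2 k x (basisQ d n m j) 0
        = if m ∈ Finset.Icc 1 i then nth x.1 m j else 0 := by
      rw [Finset.sum_congr rfl (fun k hk => hDHP m j k
        (Finset.mem_Icc.mp hk).1 (le_trans (Finset.mem_Icc.mp hk).2 hi))]
      exact Finset.sum_ite_eq _ m _
    have h2 : ∑ k ∈ Finset.Icc (i + 1) n, DH d n U1 U2 k x (basisQ d n m j) 0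
        = if m ∈ Finset.Icc (i + 1) n then nth x.1 m j else 0 := by
      rw [Finset.sum_congr rfl (fun k hk => hDHP m j k
        (by have := (Finset.mem_Icc.mp hk).1; omega) (Finset.mem_Icc.mp hk).2)]
      exact Finset.sum_ite_eq _ m _
    rw [h1, h2]
    simp only [Finset.mem_Icc]
    by_cases hmi : m ≤ i
    · rw [if_pos ⟨hm1, hmi⟩, if_neg (by omega), if_pos hmi]; ring
    · rw [if_neg (by omega), if_pos ⟨by omega, hm2⟩, if_neg hmi]; ring
  have hQsum : (∑ m ∈ Finset.Icc 1 n, ∑ j, nth x.1 m j • eQ d n m j)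
      = ((0, x.1, 0, 0) : Phase d n) := by
    have inner : ∀ m, (∑ j, nth x.1 m j • eQ d n m j)
        = (((0 : Fin n → Vec d), insV d n m (nth x.1 m), (0 : Vec d), (0 : Vec d))
            : Phase d n) := by
      intro m
      refine Prod.ext ?_ ?_
      · rw [Prod.fst_sum]; simp [eQ]
      rw [Prod.snd_sum]
      refine Prod.ext ?_ ?_
      · rw [Prod.fst_sum]
        rw [← sum_smul_basisQ m (nth x.1 m)]
        apply Finset.sum_congr rfl; intro j _
        simp [eQ]
      rw [Prod.snd_sum]
      refine Prod.ext ?_ ?_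
      · rw [Prod.fst_sum]; simp [eQ]
      · rw [Prod.snd_sum]; simp [eQ]
    rw [Finset.sum_congr rfl fun m _ => inner m]
    refine Prod.ext ?_ ?_
    · rw [Prod.fst_sum]; simp
    rw [Prod.snd_sum]
    refine Prod.ext ?_ ?_
    · rw [Prod.fst_sum]
      exact sum_insV x.1
    rw [Prod.snd_sum]
    refine Prod.ext ?_ ?_
    · rw [Prod.fst_sum]; simp
    · rw [Prod.snd_sum]; simp
  have hQ : (∑ m ∈ Finset.Icc 1 n, ∑ j, nth x.1 m j * L (eQ d n m j))
      = L ((0, x.1, 0, 0) : Phase d n) := by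
    rw [← hQsum, map_sum]
    apply Finset.sum_congr rfl; intro m _
    rw [map_sum]
    apply Finset.sum_congr rfl; intro j _
    rw [_root_.map_smul]; simp
  have hLQ : L ((0, x.1, 0, 0) : Phase d n)
      = 1 / T1 * (∑ k ∈ Finset.Icc 1 i, DH d n U1 U2 k x 0 x.1)
      + 1 / Tn * (∑ k ∈ Finset.Icc (i + 1) n, DH d n U1 U2 k x 0 x.1) := by
    rw [eL]; simp
  have hV : ∀ m, 1 ≤ m → m ≤ n → (∑ j, M (basisQ d n m j) * L (eP d n m j))
      = (if m ≤ i then 1 / T1 else 1 / Tn) * M (insV d n m (nth x.1 m)) := by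
    intro m hm1 hm2
    have h1 : ∀ j : Fin d, M (basisQ d n m j) * L (eP d n m j)
        = (if m ≤ i then 1 / T1 else 1 / Tn) * (nth x.1 m j * M (basisQ d n m j)) := by
      intro j; rw [hP m j hm1 hm2]; ring
    rw [Finset.sum_congr rfl fun j _ => h1 j, ← Finset.mul_sum]
    congr 1
    have h2 : ∀ j : Fin d, nth x.1 m j * M (basisQ d n m j)
        = M (nth x.1 m j • basisQ d n m j) := by
      intro j; rw [_root_.map_smul]; simp
    rw [Finset.sum_congr rfl fun j _ => h2 j, ← map_sum, sum_smul_basisQ]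
  have hMins : ∀ m, 1 ≤ m → m ≤ n → M (insV d n m (nth x.1 m)) = Wm m := by
    intro m hm1 hm2
    rw [eM, hWm]
    have hA : (∑ k ∈ Finset.Icc 1 n,
          fderiv ℝ U1 (nth x.2.1 k) (nth (insV d n m (nth x.1 m)) k))
        = fderiv ℝ U1 (nth x.2.1 m) (nth x.1 m) := by
      rw [Finset.sum_congr rfl (fun k hk => by
        rw [nth_insV (Finset.mem_Icc.mp hk).1 (Finset.mem_Icc.mp hk).2,
          apply_ite (fderiv ℝ U1 (nth x.2.1 k)), map_zero])]
      rw [Finset.sum_ite_eq, if_pos (Finset.mem_Icc.mpr ⟨hm1, hm2⟩)]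
    have hB : (∑ k ∈ Finset.Icc 1 (n - 1), fderiv ℝ U2 (nth x.2.1 k - nth x.2.1 (k + 1))
          (nth (insV d n m (nth x.1 m)) k - nth (insV d n m (nth x.1 m)) (k + 1)))
        = (if m < n then fderiv ℝ U2 (nth x.2.1 m - nth x.2.1 (m + 1)) (nth x.1 m) else 0)
          - (if 2 ≤ m then fderiv ℝ U2 (nth x.2.1 (m - 1) - nth x.2.1 m) (nth x.1 m)
              else 0) := by
      have step : ∀ k ∈ Finset.Icc 1 (n - 1),
          fderiv ℝ U2 (nth x.2.1 k - nth x.2.1 (k + 1))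
            (nth (insV d n m (nth x.1 m)) k - nth (insV d n m (nth x.1 m)) (k + 1))
          = (if m = k then
                fderiv ℝ U2 (nth x.2.1 k - nth x.2.1 (k + 1)) (nth x.1 m) else 0)
            - (if m = k + 1 then
                fderiv ℝ U2 (nth x.2.1 k - nth x.2.1 (k + 1)) (nth x.1 m) else 0) := by
        intro k hk
        obtain ⟨hk1, hk2⟩ := Finset.mem_Icc.mp hk
        rw [nth_insV hk1 (by omega), nth_insV (by omega) (by omega), map_sub,
          apply_ite (fderiv ℝ U2 (nth x.2.1 k - nth x.2.1 (k + 1))),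
          apply_ite (fderiv ℝ U2 (nth x.2.1 k - nth x.2.1 (k + 1))), map_zero]
      rw [Finset.sum_congr rfl step, Finset.sum_sub_distrib]
      congr 1
      · rw [Finset.sum_ite_eq]
        by_cases hmn : m < n
        · rw [if_pos (Finset.mem_Icc.mpr ⟨hm1, by omega⟩), if_pos hmn]
        · rw [if_neg (by rw [Finset.mem_Icc]; omega), if_neg hmn]
      · by_cases hm2' : 2 ≤ m
        · rw [Finset.sum_eq_single (m - 1)]
          · have hm' : m - 1 + 1 = m := by omega
            rw [hm', if_pos rfl, if_pos hm2']
          · intro k hk hne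
            rw [if_neg (by omega)]
          · intro hnm
            exact absurd (Finset.mem_Icc.mpr ⟨by omega, by omega⟩) hnm
        · rw [if_neg hm2', Finset.sum_eq_zero]
          intro k hk
          rw [if_neg (by have := (Finset.mem_Icc.mp hk).1; omega)]
    rw [hA, hB]
  have fd_half : ∀ (D : Vec d →L[ℝ] ℝ) (a b : Vec d),
      D ((2:ℝ)⁻¹ • (a + b)) = (D a + D b) / 2 := by
    intro D a b; rw [_root_.map_smul, map_add, smul_eq_mul]; ring
  have tele : ∀ m, 1 ≤ m → m ≤ n →
      DH d n U1 U2 m x 0 x.1 - Wm m = ψ (m - 1) - ψ m := by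
    intro m hm1 hm2
    simp only [DH, hWm, hψ, nth_zero, dotp_zero_right]
    by_cases h2m : 2 ≤ m <;> by_cases hmn : m < n
    · have e1 : m - 1 + 1 = m := by omega
      simp only [if_pos h2m, if_pos hmn,
        if_pos (show 1 ≤ m - 1 ∧ m - 1 < n by omega),
        if_pos (show 1 ≤ m ∧ m < n from ⟨hm1, hmn⟩), e1, fd_half, map_sub]
      ring
    · have e1 : m - 1 + 1 = m := by omega
      simp only [if_pos h2m, if_neg hmn,
        if_pos (show 1 ≤ m - 1 ∧ m - 1 < n by omega),
        if_neg (show ¬(1 ≤ m ∧ m < n) by omega), e1, fd_half, map_sub]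
      ring
    · simp only [if_neg h2m, if_pos hmn,
        if_neg (show ¬(1 ≤ m - 1 ∧ m - 1 < n) by omega),
        if_pos (show 1 ≤ m ∧ m < n from ⟨hm1, hmn⟩), fd_half, map_sub]
      ring
    · omega
  have t1 : ∑ k ∈ Finset.Icc 1 i, DH d n U1 U2 k x 0 x.1
      = (∑ m ∈ Finset.Icc 1 i, Wm m) + (ψ 0 - ψ i) := by
    have h := telescope ψ (Nat.zero_le i)
    rw [← Finset.sum_congr rfl (fun m hm => tele m (Finset.mem_Icc.mp hm).1
      (le_trans (Finset.mem_Icc.mp hm).2 hi)), Finset.sum_sub_distrib] at h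
    linarith
  have t2 : ∑ k ∈ Finset.Icc (i + 1) n, DH d n U1 U2 k x 0 x.1
      = (∑ m ∈ Finset.Icc (i + 1) n, Wm m) + (ψ i - ψ n) := by
    have h := telescope ψ hi
    rw [← Finset.sum_congr rfl (fun m hm => tele m
      (by have := (Finset.mem_Icc.mp hm).1; omega) (Finset.mem_Icc.mp hm).2),
      Finset.sum_sub_distrib] at h
    linarith
  simp only [gen1, pd, hL.fderiv, hM.fderiv]
  have g1 : ∑ j, nth x.1 1 j * L (eR1 d n j) = 1 / T1 * dotp x.2.2.1 (nth x.1 1) := by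
    rw [Finset.sum_congr rfl fun j _ => by rw [hR1 j]]
    exact sum_mul_dotp _ _ _
  have g2 : ∑ j, nth x.1 n j * L (eRn d n j) = 1 / Tn * dotp x.2.2.2 (nth x.1 n) := by
    rw [Finset.sum_congr rfl fun j _ => by rw [hRn j]]
    exact sum_mul_dotp _ _ _
  have g3 : ∑ j, x.2.2.1 j * L (eP d n 1 j)
      = (if 1 ≤ i then 1 / T1 else 1 / Tn) * dotp (nth x.1 1) x.2.2.1 := by
    rw [Finset.sum_congr rfl fun j _ => by rw [hP 1 j le_rfl (by omega)]]
    exact sum_mul_dotp _ _ _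
  have g4 : ∑ j, x.2.2.2 j * L (eP d n n j)
      = (if n ≤ i then 1 / T1 else 1 / Tn) * dotp (nth x.1 n) x.2.2.2 := by
    rw [Finset.sum_congr rfl fun j _ => by rw [hP n j (by omega) le_rfl]]
    exact sum_mul_dotp _ _ _
  have gV : (∑ m ∈ Finset.Icc 1 n, ∑ j, M (basisQ d n m j) * L (eP d n m j))
      = ∑ m ∈ Finset.Icc 1 n, (if m ≤ i then 1 / T1 else 1 / Tn) * Wm m := by
    apply Finset.sum_congr rfl
    intro m hm
    rw [hV m (Finset.mem_Icc.mp hm).1 (Finset.mem_Icc.mp hm).2,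
      hMins m (Finset.mem_Icc.mp hm).1 (Finset.mem_Icc.mp hm).2]
  rw [g1, g2, g3, g4, hQ, hLQ, gV]
  rw [Icc_split hi]
  have s1 : ∑ m ∈ Finset.Icc 1 i, (if m ≤ i then 1 / T1 else 1 / Tn) * Wm m
      = 1 / T1 * ∑ m ∈ Finset.Icc 1 i, Wm m := by
    rw [Finset.mul_sum]
    apply Finset.sum_congr rfl; intro m hm
    rw [if_pos (Finset.mem_Icc.mp hm).2]
  have s2 : ∑ m ∈ Finset.Icc (i + 1) n, (if m ≤ i then 1 / T1 else 1 / Tn) * Wm m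
      = 1 / Tn * ∑ m ∈ Finset.Icc (i + 1) n, Wm m := by
    rw [Finset.mul_sum]
    apply Finset.sum_congr rfl; intro m hm
    rw [if_neg (by have := (Finset.mem_Icc.mp hm).1; omega)]
  rw [s1, s2, t1, t2, hψ0, hψn]
  by_cases hi0 : i = 0
  · subst hi0
    rw [if_neg (by omega), if_neg (by omega)]
    have hfl : flow d n U2 lam 0 x = - lam * dotp x.2.2.1 (nth x.1 1) := by
      simp [flow]
    simp only [sigmaF]
    rw [hfl, dotp_comm (nth x.1 1) x.2.2.1, dotp_comm (nth x.1 n) x.2.2.2, hψ0]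
    ring
  · by_cases hin : i = n
    · have hfl : flow d n U2 lam i x = lam * dotp x.2.2.2 (nth x.1 n) := by
        simp only [flow]
        rw [if_neg (by omega), if_pos hin]
      rw [if_pos (show 1 ≤ i by omega), if_pos (show n ≤ i by omega)]
      simp only [sigmaF]
      rw [hfl, dotp_comm (nth x.1 1) x.2.2.1, dotp_comm (nth x.1 n) x.2.2.2,
        show ψ i = 0 from hin ▸ hψn]
      ring
    · have h1i : 1 ≤ i := by omega
      have hin' : i < n := by omega
      have hflow : ∑ j, ((nth x.1 i j + nth x.1 (i + 1) j) / 2)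
            * fderiv ℝ U2 (nth x.2.1 i - nth x.2.1 (i + 1)) (Pi.single j 1) = ψ i := by
        rw [hψ]
        simp only [if_pos (show 1 ≤ i ∧ i < n from ⟨h1i, hin'⟩)]
        rw [← clm_apply_eq_sum (fderiv ℝ U2 (nth x.2.1 i - nth x.2.1 (i + 1)))
          ((2:ℝ)⁻¹ • (nth x.1 i + nth x.1 (i + 1)))]
        apply Finset.sum_congr rfl; intro j _
        simp only [Pi.smul_apply, Pi.add_apply, smul_eq_mul]
        ring
      have hfl : flow d n U2 lam i x = ψ i := by
        simp only [flow]
        rw [if_neg (by omega), if_neg hin, hflow]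
      rw [if_pos h1i, if_neg (by omega)]
      simp only [sigmaF]
      rw [hfl, dotp_comm (nth x.1 1) x.2.2.1, dotp_comm (nth x.1 n) x.2.2.2]
      ring

end EP
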